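/- arXiv:1103.3756 — 2 statements merged into one kernel-verified Lean document; each statement's English description precedes it below -/
import Mathlib

section
/- Let G be a twin-free graph. Define the directed graph H(G) on V(G) with an arc from u to v whenever there exists a vertex x with N[v] = N[u] ∪ {x} (in particular N[u] ⊆ N[v]). If G contains no clique of size k, then the in-degree of every vertex in H(G) is at most 2k−3 and the out-degree of every vertex is at most k−2. -/
open SimpleGraph

variable {V : Type*}

/-- Closed neighbourhood of a vertex. -/
def closedNbhd (G : SimpleGraph V) (v : V) : Set V := insert v (G.neighborSet v)

/-- `C` is a dominating set of `G`. -/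
def Dominating (G : SimpleGraph V) (C : Set V) : Prop :=
  ∀ v, v ∉ C → ∃ u ∈ C, G.Adj v u

/-- `C` is a separating set of `G`. -/
def Separating (G : SimpleGraph V) (C : Set V) : Prop :=
  ∀ u v : V, u ≠ v → closedNbhd G u ∩ C ≠ closedNbhd G v ∩ C

/-- `C` is an identifying code of `G`. -/
def IdCode (G : SimpleGraph V) (C : Set V) : Prop :=
  Dominating G C ∧ Separating G C

/-- `G` has no pair of twins. -/
def TwinFree (G : SimpleGraph V) : Prop :=
  ∀ u v : V, u ≠ v → closedNbhd G u ≠ closedNbhd G v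

/-- Arc of the auxiliary directed graph $\mathcal H(G)$. -/
def HasArc (G : SimpleGraph V) (u v : V) : Prop :=
  ∃ x, x ∉ closedNbhd G u ∧ closedNbhd G v = insert x (closedNbhd G u)

lemma mem_closedNbhd_self (G : SimpleGraph V) (v : V) : v ∈ closedNbhd G v :=
  Set.mem_insert _ _

lemma adj_of_mem_closedNbhd {G : SimpleGraph V} {u v : V} (h : u ∈ closedNbhd G v)
    (hne : u ≠ v) : G.Adj u v := by
  rcases h with h | h
  · exact absurd h hne
  · exact G.adj_symm h

lemma mem_closedNbhd_of_adj {G : SimpleGraph V} {u v : V} (h : G.Adj u v) :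
    u ∈ closedNbhd G v := Set.mem_insert_of_mem _ h.symm

/-- Basic facts about an arc with witness `x`. -/
lemma arc_facts {G : SimpleGraph V} {u v x : V} (hx : x ∉ closedNbhd G u)
    (heq : closedNbhd G v = insert x (closedNbhd G u)) :
    G.Adj u v ∧ x ≠ v ∧ x ≠ u ∧ x ∈ closedNbhd G v ∧
      closedNbhd G u = closedNbhd G v \ {x} := by
  have hxu : x ≠ u := fun h => hx (h ▸ mem_closedNbhd_self G u)
  have hune : u ≠ v := by
    rintro rfl
    rw [heq] at hx
    exact hx (Set.mem_insert _ _)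
  have huv : u ∈ closedNbhd G v := by
    rw [heq]; exact Set.mem_insert_of_mem _ (mem_closedNbhd_self G u)
  have hadj : G.Adj u v := adj_of_mem_closedNbhd huv hune
  have hxv : x ≠ v := by
    rintro rfl
    exact hx (mem_closedNbhd_of_adj hadj.symm)
  refine ⟨hadj, hxv, hxu, by rw [heq]; exact Set.mem_insert _ _, ?_⟩
  rw [heq]
  ext y
  simp only [Set.mem_diff, Set.mem_insert_iff, Set.mem_singleton_iff]
  constructor
  · intro hy; exact ⟨Or.inr hy, fun h => hx (h ▸ hy)⟩
  · rintro ⟨h | h, hne⟩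
    · exact absurd h hne
    · exact h

lemma clique_card_lt {G : SimpleGraph V} {k : ℕ} (hk : G.CliqueFree k)
    {s : Finset V} (hs : G.IsClique (s : Set V)) : s.card < k := by
  by_contra h
  push_neg at h
  obtain ⟨t, hts, htc⟩ := Finset.exists_subset_card_eq h
  exact hk t ⟨hs.subset (by exact_mod_cast hts), htc⟩

lemma set_clique_bound [Fintype V] {G : SimpleGraph V} {k : ℕ} (hk : G.CliqueFree k)
    {v : V} {W : Set V} (hvW : v ∉ W) (hc : G.IsClique (insert v W)) :
    W.ncard + 1 < k := by
  classical
  have hWfin : W.Finite := Set.toFinite _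
  have h1 : (insert v hWfin.toFinset : Finset V).card < k := by
    apply clique_card_lt hk
    rw [Finset.coe_insert, Set.Finite.coe_toFinset]
    exact hc
  rw [Finset.card_insert_of_notMem (by simpa using hvW)] at h1
  rwa [Set.ncard_eq_toFinset_card _ hWfin]

theorem stmt8 [Fintype V] (G : SimpleGraph V) (hTF : TwinFree G) (k : ℕ)
    (hclique : G.CliqueFree k) (v : V) :
    Set.ncard {u : V | HasArc G u v} ≤ 2 * k - 3 ∧
    Set.ncard {w : V | HasArc G v w} ≤ k - 2 := by
  classical
  constructor
  · -- in-degree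
    set S : Set V := {u : V | HasArc G u v} with hS
    set f : V → V := fun u => if h : HasArc G u v then h.choose else u with hf
    have hspec : ∀ u ∈ S, f u ∉ closedNbhd G u ∧
        closedNbhd G v = insert (f u) (closedNbhd G u) := by
      intro u hu
      have h : HasArc G u v := hu
      simp only [hf, dif_pos h]
      exact h.choose_spec
    have hSadj : ∀ u ∈ S, G.Adj u v := fun u hu =>
      (arc_facts (hspec u hu).1 (hspec u hu).2).1
    have hdiff : ∀ u ∈ S, closedNbhd G u = closedNbhd G v \ {f u} := fun u hu =>
      (arc_facts (hspec u hu).1 (hspec u hu).2).2.2.2.2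
    have hinj : Set.InjOn f S := by
      intro a ha b hb hfe
      by_contra hne
      exact hTF a b hne (by rw [hdiff a ha, hdiff b hb, hfe])
    have hmatch : ∀ u1 ∈ S, ∀ u2 ∈ S, u1 ≠ u2 → ¬G.Adj u1 u2 → f u1 = u2 := by
      intro u1 h1 u2 h2 hne hnadj
      have hu2v : u2 ∈ closedNbhd G v := mem_closedNbhd_of_adj (hSadj u2 h2)
      have : u2 ∉ closedNbhd G u1 := by
        intro h
        exact hnadj (adj_of_mem_closedNbhd h (Ne.symm hne)).symm
      rw [hdiff u1 h1, Set.mem_diff] at this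
      push_neg at this
      exact (this hu2v).symm
    let e := Fintype.equivFin V
    set T : Set V := {u ∈ S | ¬(f u ∈ S ∧ f (f u) = u ∧ e (f u) < e u)} with hT
    have hTS : T ⊆ S := fun u hu => hu.1
    have hvS : v ∉ S := fun h => G.irrefl (hSadj v h)
    have hvT : v ∉ T := fun h => hvS (hTS h)
    have hTclique : G.IsClique (insert v T) := by
      intro a ha b hb hne
      rcases ha with rfl | ha
      · rcases hb with rfl | hb
        · exact absurd rfl hne
        · exact (hSadj b (hTS hb)).symm
      · rcases hb with rfl | hb
        · exact hSadj a (hTS ha)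
        · by_contra hnadj
          have hfa : f a = b := hmatch a (hTS ha) b (hTS hb) hne hnadj
          have hfb : f b = a := hmatch b (hTS hb) a (hTS ha) (Ne.symm hne)
            (fun h => hnadj h.symm)
          have h1 := ha.2
          have h2 := hb.2
          rw [hfa] at h1
          rw [hfb] at h2
          push_neg at h1 h2
          have e1 := h1 (hTS hb) (by rw [hfb])
          have e2 := h2 (hTS ha) (by rw [hfa])
          exact hne (e.injective (le_antisymm e1 e2))
    have hTcard : T.ncard + 1 < k := set_clique_bound hclique hvT hTclique
    have hST : (S \ T).ncard ≤ T.ncard := by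
      apply Set.ncard_le_ncard_of_injOn f
      · intro u hu
        obtain ⟨huS, huT⟩ := hu
        have hcond : f u ∈ S ∧ f (f u) = u ∧ e (f u) < e u := by
          by_contra h
          exact huT ⟨huS, h⟩
        obtain ⟨hfS, hff, hlt⟩ := hcond
        refine ⟨hfS, ?_⟩
        rintro ⟨-, h2, h3⟩
        rw [hff] at h3
        exact absurd h3 (not_lt_of_gt hlt)
      · exact hinj.mono Set.diff_subset
    have hsum : (S \ T).ncard + T.ncard = S.ncard :=
      Set.ncard_diff_add_ncard_of_subset hTS (Set.toFinite _)
    omega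
  · -- out-degree
    set W : Set V := {w : V | HasArc G v w} with hW
    have houtW : ∀ w ∈ W, G.Adj v w := by
      intro w hw
      obtain ⟨x, hx, heq⟩ := hw
      exact (arc_facts hx heq).1
    have hWsub : ∀ w ∈ W, ∀ w' ∈ W, w ≠ w' → G.Adj w w' := by
      intro w hw w' hw' hne
      obtain ⟨x, hx, heq⟩ := hw'
      have : w ∈ closedNbhd G w' := by
        rw [heq]
        exact Set.mem_insert_of_mem _ (mem_closedNbhd_of_adj (houtW w hw).symm)
      exact adj_of_mem_closedNbhd this hne
    have hvW : v ∉ W := fun h => G.irrefl (houtW v h)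
    have hcliqueW : G.IsClique (insert v W) := by
      intro a ha b hb hne
      rcases ha with rfl | ha
      · rcases hb with rfl | hb
        · exact absurd rfl hne
        · exact houtW b hb
      · rcases hb with rfl | hb
        · exact (houtW a ha).symm
        · exact hWsub a ha b hb hne
    have := set_clique_bound hclique hvW hcliqueW
    omega
end

section
/- Let G be a twin-free graph and H(G) the directed graph on V(G) with an arc from u to v whenever N[v] = N[u] ∪ {x} for some vertex x (denote this unique x by f(u→v)). Suppose s = f(u→v) for some arc u→v of H(G), and suppose t is an in-neighbour of s in H(G). Then v = f(t→s), i.e., N[s] = N[t] ∪ {v}. -/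
open SimpleGraph

variable {V : Type*}

lemma mem_closedNbhd_comm (G : SimpleGraph V) (a b : V) :
    a ∈ closedNbhd G b ↔ b ∈ closedNbhd G a := by
  simp only [closedNbhd, Set.mem_insert_iff, mem_neighborSet]
  constructor <;> rintro (h | h)
  · exact Or.inl h.symm
  · exact Or.inr h.symm
  · exact Or.inl h.symm
  · exact Or.inr h.symm

theorem stmt9 (G : SimpleGraph V) (hTF : TwinFree G) (u v s t x : V)
    (hs : s ∉ closedNbhd G u)
    (huv : closedNbhd G v = insert s (closedNbhd G u))
    (hx : x ∉ closedNbhd G t)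
    (hts : closedNbhd G s = insert x (closedNbhd G t)) :
    x = v := by
  -- basic facts
  have hself : ∀ a, a ∈ closedNbhd G a := fun a => Set.mem_insert a _
  have hsub_uv : closedNbhd G u ⊆ closedNbhd G v := by
    rw [huv]; exact Set.subset_insert _ _
  have hsub_ts : closedNbhd G t ⊆ closedNbhd G s := by
    rw [hts]; exact Set.subset_insert _ _
  -- v ≠ s
  have hvs : v ≠ s := by
    rintro rfl
    have : u ∈ closedNbhd G v := hsub_uv (hself u)
    exact hs ((mem_closedNbhd_comm G u v).mp this)
  -- v ∈ closedNbhd G s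
  have hsv : s ∈ closedNbhd G v := by rw [huv]; exact Set.mem_insert s _
  have hvNs : v ∈ closedNbhd G s := (mem_closedNbhd_comm G s v).mp hsv
  rw [hts] at hvNs
  rcases hvNs with h | hvt
  · exact h.symm
  · exfalso
    have htv : t ∈ closedNbhd G v := (mem_closedNbhd_comm G v t).mp hvt
    rw [huv] at htv
    rcases htv with rfl | htu
    · exact hx (by rw [hts]; exact Set.mem_insert x _)
    · have hut : u ∈ closedNbhd G t := (mem_closedNbhd_comm G t u).mp htu
      exact hs ((mem_closedNbhd_comm G u s).mp (hsub_ts hut))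
end
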